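/- arXiv:1303.1415 — 2 statements merged into one kernel-verified Lean document; each statement's English description precedes it below -/
import Mathlib

section
/- Assume E and C satisfy (EC-0), (EC-1), (EC-2), (EC-3) and the hylomorphy condition inf_{u ∈ X} Λ(u) < Λ₀. Let δ₁, δ₂ ∈ (0, δ_∞) with δ₁ < δ₂ and let u_{δ₁}, u_{δ₂} be minimizers of J_{δ₁}, J_{δ₂} respectively. Then: (a) J_{δ₁}(u_{δ₁}) < J_{δ₂}(u_{δ₂}); (b) Φ(u_{δ₁}) ≥ Φ(u_{δ₂}); (c) Λ(u_{δ₁}) ≤ Λ(u_{δ₂}); (d) C(u_{δ₁}) ≥ C(u_{δ₂}). -/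
/-!
Testing each minimizer against the other one and adding the two inequalities gives
`(δ₂ - δ₁) (Φ u₂ - Φ u₁) ≤ 0`, which is (b); (a) and (c) follow from the minimality of `u₁`.
For (d), put `f t = Λ(u₁) t + 2a t^s`. Since `E u₁ = Λ(u₁) C(u₁)`, (b) and (c) give
`f (C u₂) ≤ Φ(u₂) ≤ Φ(u₁) = f (C u₁)`, while `f` is strictly increasing to the right of `C u₁`
because `f (C u₁) = Φ(u₁) > 0` and `t ↦ t^s` grows at least linearly with slope `C(u₁)^(s-1)` there.
-/

open Filter Topology

noncomputable section

variable {X : Type*} [NormedAddCommGroup X] [InnerProductSpace ℝ X] [CompleteSpace X]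
variable {G : Type*} [Group G]

/-- A sequence converges weakly to `0`. -/
def WeakToZero (w : ℕ → X) : Prop :=
  ∀ f : X →L[ℝ] ℝ, Filter.Tendsto (fun n => f (w n)) atTop (𝓝 0)

/-- A functional `F : X → ℝ` has the splitting property. -/
def SplittingProp (F : X → ℝ) : Prop :=
  ∀ (u : X) (w : ℕ → X), WeakToZero w →
    Filter.Tendsto (fun n => F (u + w n) - F u - F (w n)) atTop (𝓝 0)

/-- A vanishing sequence with respect to the action `ρ` of `G`: bounded, and for
every sequence `g n` of group elements, `ρ (g n) (u n) ⇀ 0` weakly. -/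
def Vanishing (ρ : G → X →L[ℝ] X) (u : ℕ → X) : Prop :=
  (∃ M : ℝ, ∀ n, ‖u n‖ ≤ M) ∧ ∀ g : ℕ → G, WeakToZero (fun n => ρ (g n) (u n))

/-- The hylenic ratio `Λ u = E u / C u`. -/
def Lam (E C : X → ℝ) (u : X) : ℝ := E u / C u

/-- `Λ₀`: the infimum of `liminf Λ(u n)` over all vanishing sequences (with
`C (u n) ≠ 0`). -/
def Lam0 (ρ : G → X →L[ℝ] X) (E C : X → ℝ) : ℝ :=
  sInf { l : ℝ | ∃ u : ℕ → X, Vanishing ρ u ∧ (∀ n, C (u n) ≠ 0) ∧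
    l = Filter.liminf (fun n => Lam E C (u n)) atTop }

/-- A `G`-compact sequence: some subsequence, translated by group elements,
converges strongly. -/
def GCompactSeq (ρ : G → X →L[ℝ] X) (u : ℕ → X) : Prop :=
  ∃ φ : ℕ → ℕ, StrictMono φ ∧ ∃ g : ℕ → G, ∃ x : X,
    Filter.Tendsto (fun k => ρ (g k) (u (φ k))) atTop (𝓝 x)

/-- A functional `J` is `G`-compact if every minimizing sequence (of nonzero
elements, `J` being defined through the hylenic ratio) is `G`-compact. -/
def GCompactFun (ρ : G → X →L[ℝ] X) (J : X → ℝ) : Prop :=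
  ∀ u : ℕ → X, (∀ n, u n ≠ 0) →
    Filter.Tendsto (fun n => J (u n)) atTop (𝓝 (⨅ v : {v : X // v ≠ 0}, J ↑v)) →
    GCompactSeq ρ u

/-- `J_δ u = Λ u + δ Φ u` with `Φ u = E u + 2 a (C u)^s`. -/
def Jdel (E C : X → ℝ) (a s δ : ℝ) (u : X) : ℝ :=
  Lam E C u + δ * (E u + 2 * a * C u ^ s)

/-- `δ_∞ = sup { δ > 0 | ∃ v, J_δ v < Λ₀ }`. -/
def deltaInfty (ρ : G → X →L[ℝ] X) (E C : X → ℝ) (a s : ℝ) : ℝ :=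
  sSup { δ : ℝ | 0 < δ ∧ ∃ v : X, v ≠ 0 ∧ Jdel E C a s δ v < Lam0 ρ E C }

section Penalized

variable {α : Type*}

def penalized (Λ Φ : α → ℝ) (δ : ℝ) (u : α) : ℝ := Λ u + δ * Φ u

variable {Λ Φ : α → ℝ} {S : Set α} {δ₁ δ₂ : ℝ} {u₁ u₂ : α}

theorem penalized_lt_of_isMinOn (hδ : δ₁ < δ₂) (hΦ : 0 < Φ u₂)
    (hu₁ : IsMinOn (penalized Λ Φ δ₁) S u₁) (hu₂S : u₂ ∈ S) :
    penalized Λ Φ δ₁ u₁ < penalized Λ Φ δ₂ u₂ := by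
  have hle : penalized Λ Φ δ₁ u₁ ≤ penalized Λ Φ δ₁ u₂ := isMinOn_iff.1 hu₁ u₂ hu₂S
  have hlt : δ₁ * Φ u₂ < δ₂ * Φ u₂ := mul_lt_mul_of_pos_right hδ hΦ
  unfold penalized at *
  linarith

theorem penalty_le_of_isMinOn (hδ : δ₁ < δ₂)
    (hu₁ : IsMinOn (penalized Λ Φ δ₁) S u₁) (hu₂ : IsMinOn (penalized Λ Φ δ₂) S u₂)
    (hu₁S : u₁ ∈ S) (hu₂S : u₂ ∈ S) :
    Φ u₂ ≤ Φ u₁ := by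
  have h₁ := isMinOn_iff.1 hu₁ u₂ hu₂S
  have h₂ := isMinOn_iff.1 hu₂ u₁ hu₁S
  unfold penalized at h₁ h₂
  refine le_of_mul_le_mul_left ?_ (sub_pos.2 hδ)
  linarith

theorem le_of_isMinOn_penalized (hδ₁ : 0 ≤ δ₁) (hδ : δ₁ < δ₂)
    (hu₁ : IsMinOn (penalized Λ Φ δ₁) S u₁) (hu₂ : IsMinOn (penalized Λ Φ δ₂) S u₂)
    (hu₁S : u₁ ∈ S) (hu₂S : u₂ ∈ S) :
    Λ u₁ ≤ Λ u₂ := by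
  have h₁ := isMinOn_iff.1 hu₁ u₂ hu₂S
  have hΦ := mul_le_mul_of_nonneg_left (penalty_le_of_isMinOn hδ hu₁ hu₂ hu₁S hu₂S) hδ₁
  unfold penalized at h₁
  linarith

end Penalized

theorem mul_add_mul_rpow_lt_of_lt {L b s c t : ℝ} (hb : 0 ≤ b) (hs : 1 ≤ s) (hc : 0 < c)
    (hpos : 0 < L * c + b * c ^ s) (hct : c < t) :
    L * c + b * c ^ s < L * t + b * t ^ s := by
  have hcs : c ^ s = c ^ (s - 1) * c := by
    rw [← Real.rpow_add_one hc.ne', sub_add_cancel]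
  have hts : t ^ s = t ^ (s - 1) * t := by
    rw [← Real.rpow_add_one (hc.trans hct).ne', sub_add_cancel]
  have hpow : c ^ (s - 1) ≤ t ^ (s - 1) :=
    Real.rpow_le_rpow hc.le hct.le (sub_nonneg.2 hs)
  have hslope : 0 < L + b * c ^ (s - 1) := by
    refine pos_of_mul_pos_left ?_ hc.le
    calc 0 < L * c + b * c ^ s := hpos
      _ = (L + b * c ^ (s - 1)) * c := by rw [hcs]; ring
  have hgrowth : c ^ (s - 1) * (t - c) ≤ t ^ s - c ^ s := by
    rw [hcs, hts]
    linarith [mul_le_mul_of_nonneg_right hpow (hc.trans hct).le]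
  linarith [mul_le_mul_of_nonneg_left hgrowth hb, mul_pos hslope (sub_pos.2 hct)]

theorem le_of_add_mul_rpow_le_of_div_le {α : Type*} {E C : α → ℝ} {b s : ℝ} {u₁ u₂ : α}
    (hb : 0 ≤ b) (hs : 1 ≤ s) (hC₁ : 0 < C u₁) (hC₂ : 0 < C u₂)
    (hΦ₁ : 0 < E u₁ + b * C u₁ ^ s) (hΦ : E u₂ + b * C u₂ ^ s ≤ E u₁ + b * C u₁ ^ s)
    (hΛ : E u₁ / C u₁ ≤ E u₂ / C u₂) :
    C u₂ ≤ C u₁ := by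
  set L := E u₁ / C u₁
  have hE₁ : E u₁ = L * C u₁ := (div_mul_cancel₀ _ hC₁.ne').symm
  have hE₂ : L * C u₂ ≤ E u₂ := (le_div_iff₀ hC₂).1 hΛ
  by_contra! hlt
  have := mul_add_mul_rpow_lt_of_lt hb hs hC₁ (hE₁ ▸ hΦ₁) hlt
  linarith

theorem minimizers_monotonicity_general
    (E C : X → ℝ) (a s : ℝ) (ha : 0 < a) (hs : 1 < s)
    -- (EC-3)
    (hEC3i : ∀ u : X, u ≠ 0 → 0 < C u ∧ 0 < E u + a * C u ^ s)
    (δ₁ δ₂ : ℝ) (hδ₁ : 0 < δ₁) (hδ₁₂ : δ₁ < δ₂)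
    (u₁ u₂ : X) (hu₁0 : u₁ ≠ 0) (hu₂0 : u₂ ≠ 0)
    (hu₁ : ∀ v : X, v ≠ 0 → Jdel E C a s δ₁ u₁ ≤ Jdel E C a s δ₁ v)
    (hu₂ : ∀ v : X, v ≠ 0 → Jdel E C a s δ₂ u₂ ≤ Jdel E C a s δ₂ v) :
    Jdel E C a s δ₁ u₁ < Jdel E C a s δ₂ u₂ ∧
    E u₂ + 2 * a * C u₂ ^ s ≤ E u₁ + 2 * a * C u₁ ^ s ∧
    Lam E C u₁ ≤ Lam E C u₂ ∧
    C u₂ ≤ C u₁ := by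
  set Φ : X → ℝ := fun u => E u + 2 * a * C u ^ s
  have hΦpos : ∀ u, u ≠ 0 → 0 < Φ u := fun u hu => by
    obtain ⟨hC, hE⟩ := hEC3i u hu
    have : 0 < a * C u ^ s := mul_pos ha (Real.rpow_pos_of_pos hC s)
    simp only [Φ]
    linarith
  have hmin₁ : IsMinOn (penalized (Lam E C) Φ δ₁) {0}ᶜ u₁ := isMinOn_iff.2 hu₁
  have hmin₂ : IsMinOn (penalized (Lam E C) Φ δ₂) {0}ᶜ u₂ := isMinOn_iff.2 hu₂
  have hΦ := penalty_le_of_isMinOn hδ₁₂ hmin₁ hmin₂ hu₁0 hu₂0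
  have hΛ := le_of_isMinOn_penalized hδ₁.le hδ₁₂ hmin₁ hmin₂ hu₁0 hu₂0
  refine ⟨penalized_lt_of_isMinOn hδ₁₂ (hΦpos u₂ hu₂0) hmin₁ hu₂0, hΦ, hΛ, ?_⟩
  exact le_of_add_mul_rpow_le_of_div_le (by positivity) hs.le (hEC3i u₁ hu₁0).1
    (hEC3i u₂ hu₂0).1 (hΦpos u₁ hu₁0) hΦ hΛ

/-- **Lemma `MM3`.** Under (EC-0)–(EC-3) and the hylomorphy
condition, if `δ₁ < δ₂` lie in `(0, δ_∞)` and `u₁, u₂` are minimizers of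
`J_{δ₁}, J_{δ₂}` respectively, then (a) `J_{δ₁}(u₁) < J_{δ₂}(u₂)`,
(b) `Φ(u₁) ≥ Φ(u₂)`, (c) `Λ(u₁) ≤ Λ(u₂)`, (d) `C(u₁) ≥ C(u₂)`. -/
theorem minimizers_monotonicity
    (ρ : G → X →L[ℝ] X)
    (hiso : ∀ g x, ‖ρ g x‖ = ‖x‖) (hmul : ∀ g h x, ρ (g * h) x = ρ g (ρ h x))
    (E C : X → ℝ) (a s : ℝ) (ha : 0 < a) (hs : 1 < s)
    -- (EC-0)
    (hE0 : E 0 = 0) (hC0 : C 0 = 0)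
    (hE0' : fderiv ℝ E 0 = 0) (hC0' : fderiv ℝ C 0 = 0)
    -- (EC-1)
    (hEinv : ∀ g u, E (ρ g u) = E u) (hCinv : ∀ g u, C (ρ g u) = C u)
    -- (EC-2)
    (hEsplit : SplittingProp E) (hCsplit : SplittingProp C)
    -- (EC-3)
    (hEC3i : ∀ u : X, u ≠ 0 → 0 < C u ∧ 0 < E u + a * C u ^ s)
    (hEC3ii : Filter.Tendsto (fun u : X => E u + a * C u ^ s)
        (Filter.comap (fun u : X => ‖u‖) atTop) atTop)
    (hEC3iii : ∀ u : ℕ → X, (∃ M : ℝ, ∀ n, ‖u n‖ ≤ M) →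
        Filter.Tendsto (fun n => E (u n) + a * C (u n) ^ s) atTop (𝓝 0) →
        Filter.Tendsto u atTop (𝓝 0))
    -- hylomorphy condition : inf Λ < Λ₀
    (hhylo : ∃ u : X, u ≠ 0 ∧ Lam E C u < Lam0 ρ E C)
    (δ₁ δ₂ : ℝ) (hδ₁ : 0 < δ₁) (hδ₁₂ : δ₁ < δ₂) (hδ₂ : δ₂ < deltaInfty ρ E C a s)
    (u₁ u₂ : X) (hu₁0 : u₁ ≠ 0) (hu₂0 : u₂ ≠ 0)
    (hu₁ : ∀ v : X, v ≠ 0 → Jdel E C a s δ₁ u₁ ≤ Jdel E C a s δ₁ v)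
    (hu₂ : ∀ v : X, v ≠ 0 → Jdel E C a s δ₂ u₂ ≤ Jdel E C a s δ₂ v) :
    Jdel E C a s δ₁ u₁ < Jdel E C a s δ₂ u₂ ∧
    E u₂ + 2 * a * C u₂ ^ s ≤ E u₁ + 2 * a * C u₁ ^ s ∧
    Lam E C u₁ ≤ Lam E C u₂ ∧
    C u₂ ≤ C u₁ :=
  minimizers_monotonicity_general E C a s ha hs hEC3i δ₁ δ₂ hδ₁ hδ₁₂ u₁ u₂ hu₁0 hu₂0 hu₁ hu₂
end
end

section
/- Assume E and C are Fréchet differentiable, satisfy (EC-0), (EC-1), (EC-2), (EC-3), the hylomorphy condition inf_{u ∈ X} Λ(u) < Λ₀, and the nondegeneracy condition: E'(u) = 0 and C'(u) = 0 together imply u = 0. Let δ₁, δ₂ ∈ (0, δ_∞) with δ₁ < δ₂ and let u_{δ₁}, u_{δ₂} be nonzero minimizers of J_{δ₁}, J_{δ₂} respectively. Then: (a) Φ(u_{δ₁}) > Φ(u_{δ₂}); (b) Λ(u_{δ₁}) < Λ(u_{δ₂}); (c) C(u_{δ₁}) > C(u_{δ₂}). -/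
open Filter Topology

noncomputable section

variable {X : Type*} [NormedAddCommGroup X] [InnerProductSpace ℝ X] [CompleteSpace X]
variable {G : Type*} [Group G]

/-! Comparing `J_{δ₁}` and `J_{δ₂}` at the two minimizers gives `(δ₂ - δ₁) (Φ u₁ - Φ u₂) ≥ 0`.
If `Φ u₁ = Φ u₂`, then also `Λ u₁ = Λ u₂`, so `u₁` minimizes `J_{δ₂}` as well; a critical point of
`Λ + δ Φ` for two values of `δ` is a critical point of both `Λ` and `Φ`. But `Λ' = 0` means
`E' = Λ C'`, and then `Φ' = (Λ + 2 a s C^{s-1}) C'` with a coefficient that is positive by (EC-3)(i),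
so `E'` and `C'` vanish at `u₁ ≠ 0`, against nondegeneracy. Part (b) follows from the minimality
of `u₁`, and part (c) from (a) and (b) after writing `E = Λ C`. -/

def Phi (E C : X → ℝ) (a s : ℝ) (u : X) : ℝ := E u + 2 * a * C u ^ s

section PenalizedMinimizers

variable {α : Type*} {f g : α → ℝ} {S : Set α} {δ₁ δ₂ : ℝ} {x₁ x₂ : α}

theorem le_of_isMinOn_add_mul (hδ : δ₁ < δ₂) (h₁ : IsMinOn (fun x => f x + δ₁ * g x) S x₁)
    (h₂ : IsMinOn (fun x => f x + δ₂ * g x) S x₂) (hx₁ : x₁ ∈ S) (hx₂ : x₂ ∈ S) :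
    g x₂ ≤ g x₁ := by
  have h₁₂ : f x₁ + δ₁ * g x₁ ≤ f x₂ + δ₁ * g x₂ := h₁ hx₂
  have h₂₁ : f x₂ + δ₂ * g x₂ ≤ f x₁ + δ₂ * g x₁ := h₂ hx₁
  nlinarith

theorem IsMinOn.of_add_mul_of_eq (h₁ : IsMinOn (fun x => f x + δ₁ * g x) S x₁)
    (h₂ : IsMinOn (fun x => f x + δ₂ * g x) S x₂) (hx₂ : x₂ ∈ S) (heq : g x₂ = g x₁) :
    IsMinOn (fun x => f x + δ₂ * g x) S x₁ := by
  intro x hx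
  have h₁₂ : f x₁ + δ₁ * g x₁ ≤ f x₂ + δ₁ * g x₂ := h₁ hx₂
  have h₂x : f x₂ + δ₂ * g x₂ ≤ f x + δ₂ * g x := h₂ hx
  show f x₁ + δ₂ * g x₁ ≤ f x + δ₂ * g x
  rw [heq] at h₁₂ h₂x
  linarith

theorem lt_of_isMinOn_add_mul (hδ : 0 < δ₁) (h₁ : IsMinOn (fun x => f x + δ₁ * g x) S x₁)
    (hx₂ : x₂ ∈ S) (hg : g x₂ < g x₁) : f x₁ < f x₂ := by
  have h₁₂ : f x₁ + δ₁ * g x₁ ≤ f x₂ + δ₁ * g x₂ := h₁ hx₂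
  nlinarith

end PenalizedMinimizers

theorem fderiv_eq_zero_of_isMinOn_add_mul {V : Type*} [NormedAddCommGroup V] [NormedSpace ℝ V]
    {f g : V → ℝ} {U : Set V} {x : V} {δ₁ δ₂ : ℝ} (hU : IsOpen U) (hx : x ∈ U)
    (hf : DifferentiableAt ℝ f x) (hg : DifferentiableAt ℝ g x) (hδ : δ₁ ≠ δ₂)
    (h₁ : IsMinOn (fun x => f x + δ₁ * g x) U x) (h₂ : IsMinOn (fun x => f x + δ₂ * g x) U x) :
    fderiv ℝ f x = 0 ∧ fderiv ℝ g x = 0 := by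
  have crit : ∀ δ, IsMinOn (fun y => f y + δ * g y) U x →
      fderiv ℝ f x + δ • fderiv ℝ g x = 0 := fun δ h =>
    (h.isLocalMin (hU.mem_nhds hx)).hasFDerivAt_eq_zero
      (hf.hasFDerivAt.add (hg.hasFDerivAt.const_mul δ))
  have hg' : (δ₁ - δ₂) • fderiv ℝ g x = 0 := by
    rw [sub_smul, ← add_sub_add_left_eq_sub _ _ (fderiv ℝ f x), crit δ₁ h₁, crit δ₂ h₂, sub_zero]
  have hg0 : fderiv ℝ g x = 0 := (smul_eq_zero.mp hg').resolve_left (sub_ne_zero.mpr hδ)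
  refine ⟨?_, hg0⟩
  simpa [hg0] using crit δ₁ h₁

theorem div_add_mul_rpow_sub_one_pos {e c b s : ℝ} (hc : 0 < c) (h : 0 < e + b * c ^ s) :
    0 < e / c + b * c ^ (s - 1) := by
  have hsplit : e / c + b * c ^ (s - 1) = (e + b * c ^ s) / c := by
    rw [Real.rpow_sub_one hc.ne']
    field_simp
  rw [hsplit]
  positivity

theorem lam_add_phi_coeff_pos {e c a s : ℝ} (hc : 0 < c) (hpos : 0 < e + a * c ^ s) (ha : 0 ≤ a)
    (hs : 1 ≤ 2 * s) : 0 < e / c + 2 * a * (s * c ^ (s - 1)) := by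
  have hrest : 0 ≤ a * (2 * s - 1) * c ^ (s - 1) := by
    have := Real.rpow_nonneg hc.le (s - 1)
    have : 0 ≤ 2 * s - 1 := by linarith
    positivity
  linarith [div_add_mul_rpow_sub_one_pos hc hpos]

theorem rpow_sub_one_mul_sub_le_rpow_sub_rpow {x y s : ℝ} (hx : 0 ≤ x) (hxy : x ≤ y) (hs : 1 ≤ s) :
    y ^ (s - 1) * (y - x) ≤ y ^ s - x ^ s := by
  have hsplit : ∀ z : ℝ, 0 ≤ z → z ^ s = z ^ (s - 1) * z := fun z hz => by
    rw [← Real.rpow_add_one' hz (by linarith), sub_add_cancel]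
  have hmono : x ^ (s - 1) ≤ y ^ (s - 1) := Real.rpow_le_rpow hx hxy (by linarith)
  rw [hsplit x hx, hsplit y (hx.trans hxy)]
  nlinarith

theorem lt_of_phi_lt_of_lam_lt {e₁ c₁ e₂ c₂ a s : ℝ} (hc₁ : 0 < c₁) (hc₂ : 0 < c₂) (ha : 0 ≤ a)
    (hs : 1 ≤ s) (hpos : 0 < e₂ + a * c₂ ^ s) (hΛ : e₁ / c₁ < e₂ / c₂)
    (hΦ : e₂ + 2 * a * c₂ ^ s < e₁ + 2 * a * c₁ ^ s) : c₂ < c₁ := by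
  by_contra! hc
  have hpow := rpow_sub_one_mul_sub_le_rpow_sub_rpow hc₁.le hc hs
  have hΛ₂ : 0 < e₂ / c₂ + a * c₂ ^ (s - 1) := div_add_mul_rpow_sub_one_pos hc₂ hpos
  have he₁ : e₁ = e₁ / c₁ * c₁ := (div_mul_cancel₀ _ hc₁.ne').symm
  have he₂ : e₂ = e₂ / c₂ * c₂ := (div_mul_cancel₀ _ hc₂.ne').symm
  have hslack : 0 ≤ a * c₂ ^ (s - 1) * (c₂ - c₁) := by
    have := Real.rpow_nonneg hc₂.le (s - 1)
    have : 0 ≤ c₂ - c₁ := by linarith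
    positivity
  -- `Φ₂ - Φ₁ = (Λ₂ - Λ₁) c₁ + Λ₂ (c₂ - c₁) + 2a (c₂ˢ - c₁ˢ) ≥ (Λ₂ - Λ₁) c₁ + (Λ₂ + 2a c₂ˢ⁻¹) (c₂ - c₁) > 0`
  nlinarith [mul_lt_mul_of_pos_right hΛ hc₁, mul_nonneg hΛ₂.le (by linarith : (0:ℝ) ≤ c₂ - c₁)]

section Derivatives

variable {V : Type*} [NormedAddCommGroup V] [NormedSpace ℝ V]
  {E C : V → ℝ} {E' C' : V →L[ℝ] ℝ} {u : V}

theorem hasFDerivAt_lam (hE : HasFDerivAt E E' u) (hC : HasFDerivAt C C' u) (hCu : C u ≠ 0) :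
    HasFDerivAt (Lam E C) ((C u)⁻¹ • (E' - Lam E C u • C')) u := by
  have h : HasFDerivAt (fun v => E v * (C v)⁻¹) (E u • (-(C u ^ 2)⁻¹ • C') + (C u)⁻¹ • E') u :=
    hE.mul ((hasDerivAt_inv hCu).comp_hasFDerivAt u hC)
  refine h.congr_fderiv ?_
  ext v
  simp only [Lam, add_apply, smul_apply, sub_apply, smul_eq_mul]
  field_simp
  ring

theorem hasFDerivAt_phi (a s : ℝ) (hE : HasFDerivAt E E' u) (hC : HasFDerivAt C C' u)
    (hCu : C u ≠ 0) :
    HasFDerivAt (Phi E C a s) (E' + (2 * a * (s * C u ^ (s - 1))) • C') u := by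
  rw [mul_smul]
  exact hE.add ((hC.rpow_const (p := s) (Or.inl hCu)).const_mul (2 * a))

theorem fderiv_eq_zero_of_fderiv_lam_phi_eq_zero {a s : ℝ} (hE : DifferentiableAt ℝ E u)
    (hC : DifferentiableAt ℝ C u) (hCu : 0 < C u) (hpos : 0 < E u + a * C u ^ s) (ha : 0 ≤ a)
    (hs : 1 ≤ 2 * s) (hΛ : fderiv ℝ (Lam E C) u = 0) (hΦ : fderiv ℝ (Phi E C a s) u = 0) :
    fderiv ℝ E u = 0 ∧ fderiv ℝ C u = 0 := by
  rw [(hasFDerivAt_lam hE.hasFDerivAt hC.hasFDerivAt hCu.ne').fderiv, smul_eq_zero,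
    sub_eq_zero] at hΛ
  rw [(hasFDerivAt_phi a s hE.hasFDerivAt hC.hasFDerivAt hCu.ne').fderiv] at hΦ
  have hE' : fderiv ℝ E u = Lam E C u • fderiv ℝ C u :=
    hΛ.resolve_left (inv_ne_zero hCu.ne')
  have hC' : fderiv ℝ C u = 0 := by
    rw [hE', ← add_smul] at hΦ
    exact (smul_eq_zero.mp hΦ).resolve_left (lam_add_phi_coeff_pos hCu hpos ha hs).ne'
  exact ⟨by rw [hE', hC', smul_zero], hC'⟩

end Derivatives

theorem minimizers_strict_monotonicity_general
    (E C : X → ℝ) (a s : ℝ) (ha : 0 < a) (hs : 1 < s)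
    (hEdiff : Differentiable ℝ E) (hCdiff : Differentiable ℝ C)
    -- (EC-3)
    (hEC3i : ∀ u : X, u ≠ 0 → 0 < C u ∧ 0 < E u + a * C u ^ s)
    -- nondegeneracy
    (hnondeg : ∀ u : X, fderiv ℝ E u = 0 → fderiv ℝ C u = 0 → u = 0)
    (δ₁ δ₂ : ℝ) (hδ₁ : 0 < δ₁) (hδ₁₂ : δ₁ < δ₂)
    (u₁ u₂ : X) (hu₁0 : u₁ ≠ 0) (hu₂0 : u₂ ≠ 0)
    (hu₁ : ∀ v : X, v ≠ 0 → Jdel E C a s δ₁ u₁ ≤ Jdel E C a s δ₁ v)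
    (hu₂ : ∀ v : X, v ≠ 0 → Jdel E C a s δ₂ u₂ ≤ Jdel E C a s δ₂ v) :
    E u₂ + 2 * a * C u₂ ^ s < E u₁ + 2 * a * C u₁ ^ s ∧
    Lam E C u₁ < Lam E C u₂ ∧
    C u₂ < C u₁ := by
  have hmin₁ : IsMinOn (fun v => Lam E C v + δ₁ * Phi E C a s v) {0}ᶜ u₁ := hu₁
  have hmin₂ : IsMinOn (fun v => Lam E C v + δ₂ * Phi E C a s v) {0}ᶜ u₂ := hu₂
  obtain ⟨hC₁, hpos₁⟩ := hEC3i u₁ hu₁0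
  obtain ⟨hC₂, hpos₂⟩ := hEC3i u₂ hu₂0
  have hΦ : Phi E C a s u₂ < Phi E C a s u₁ := by
    refine (le_of_isMinOn_add_mul hδ₁₂ hmin₁ hmin₂ hu₁0 hu₂0).lt_of_ne fun heq => hu₁0 ?_
    have hE := (hEdiff u₁).hasFDerivAt
    have hC := (hCdiff u₁).hasFDerivAt
    obtain ⟨hΛ', hΦ'⟩ := fderiv_eq_zero_of_isMinOn_add_mul isOpen_compl_singleton hu₁0
      (hasFDerivAt_lam hE hC hC₁.ne').differentiableAt
      (hasFDerivAt_phi a s hE hC hC₁.ne').differentiableAt hδ₁₂.ne hmin₁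
      (hmin₁.of_add_mul_of_eq hmin₂ hu₂0 heq)
    obtain ⟨hE', hC'⟩ := fderiv_eq_zero_of_fderiv_lam_phi_eq_zero (hEdiff u₁) (hCdiff u₁) hC₁
      hpos₁ ha.le (by linarith) hΛ' hΦ'
    exact hnondeg u₁ hE' hC'
  have hΛ : Lam E C u₁ < Lam E C u₂ := lt_of_isMinOn_add_mul hδ₁ hmin₁ hu₂0 hΦ
  exact ⟨hΦ, hΛ, lt_of_phi_lt_of_lam_lt hC₁ hC₂ ha.le hs.le hpos₂ hΛ hΦ⟩

/-- **Lemma `BB3`.** Under (EC-0)–(EC-3), the hylomorphy condition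
and the nondegeneracy condition (`E'(u) = 0` and `C'(u) = 0` imply `u = 0`), if
`δ₁ < δ₂` lie in `(0, δ_∞)` and `u₁, u₂` are nonzero minimizers of
`J_{δ₁}, J_{δ₂}` respectively, then (a) `Φ(u₁) > Φ(u₂)`, (b) `Λ(u₁) < Λ(u₂)`,
(c) `C(u₁) > C(u₂)`. -/
theorem minimizers_strict_monotonicity
    (ρ : G → X →L[ℝ] X)
    (hiso : ∀ g x, ‖ρ g x‖ = ‖x‖) (hmul : ∀ g h x, ρ (g * h) x = ρ g (ρ h x))
    (E C : X → ℝ) (a s : ℝ) (ha : 0 < a) (hs : 1 < s)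
    (hEdiff : Differentiable ℝ E) (hCdiff : Differentiable ℝ C)
    -- (EC-0)
    (hE0 : E 0 = 0) (hC0 : C 0 = 0)
    (hE0' : fderiv ℝ E 0 = 0) (hC0' : fderiv ℝ C 0 = 0)
    -- (EC-1)
    (hEinv : ∀ g u, E (ρ g u) = E u) (hCinv : ∀ g u, C (ρ g u) = C u)
    -- (EC-2)
    (hEsplit : SplittingProp E) (hCsplit : SplittingProp C)
    -- (EC-3)
    (hEC3i : ∀ u : X, u ≠ 0 → 0 < C u ∧ 0 < E u + a * C u ^ s)
    (hEC3ii : Filter.Tendsto (fun u : X => E u + a * C u ^ s)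
        (Filter.comap (fun u : X => ‖u‖) atTop) atTop)
    (hEC3iii : ∀ u : ℕ → X, (∃ M : ℝ, ∀ n, ‖u n‖ ≤ M) →
        Filter.Tendsto (fun n => E (u n) + a * C (u n) ^ s) atTop (𝓝 0) →
        Filter.Tendsto u atTop (𝓝 0))
    -- hylomorphy condition : inf Λ < Λ₀
    (hhylo : ∃ u : X, u ≠ 0 ∧ Lam E C u < Lam0 ρ E C)
    -- nondegeneracy
    (hnondeg : ∀ u : X, fderiv ℝ E u = 0 → fderiv ℝ C u = 0 → u = 0)
    (δ₁ δ₂ : ℝ) (hδ₁ : 0 < δ₁) (hδ₁₂ : δ₁ < δ₂) (hδ₂ : δ₂ < deltaInfty ρ E C a s)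
    (u₁ u₂ : X) (hu₁0 : u₁ ≠ 0) (hu₂0 : u₂ ≠ 0)
    (hu₁ : ∀ v : X, v ≠ 0 → Jdel E C a s δ₁ u₁ ≤ Jdel E C a s δ₁ v)
    (hu₂ : ∀ v : X, v ≠ 0 → Jdel E C a s δ₂ u₂ ≤ Jdel E C a s δ₂ v) :
    E u₂ + 2 * a * C u₂ ^ s < E u₁ + 2 * a * C u₁ ^ s ∧
    Lam E C u₁ < Lam E C u₂ ∧
    C u₂ < C u₁ :=
  minimizers_strict_monotonicity_general E C a s ha hs hEdiff hCdiff hEC3i hnondeg δ₁ δ₂ hδ₁ hδ₁₂ u₁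
    u₂ hu₁0 hu₂0 hu₁ hu₂

end
end
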